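/- arXiv:1306.4277 — 2 statements merged into one kernel-verified Lean document; each statement's English description precedes it below -/
import Mathlib

section
/- Let f : [0,1] × [0,∞) → ℝ be continuous with f(s,u) = 0 for u > r. Fix (s, u₀) ∈ [0,1] × [0,r]. If (P_{p,q})_{q≥1} are polynomials uniformly bounded on [0, r+1] converging pointwise on [0, r+1] to the indicator of [u₀, u₀ + 1/p], then f(s,u₀) = lim_{p→∞} lim_{q→∞} p ∫_0^∞ P_{p,q}(u) f(s,u) du. -/
/-! Dominated convergence (with the bound `C · sup |f(s,·)|` on `[0, r+1]`, outside of which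
`f(s,·)` vanishes) turns the inner limit into `p ∫_{u₀}^{u₀+1/p} f(s,u) du`, and this average
of a continuous function tends to `f(s,u₀)` by the fundamental theorem of calculus. -/

open MeasureTheory Set Filter Topology

theorem tendsto_integral_mul_of_tendsto_of_bounded {X : Type*} [MeasurableSpace X]
    {μ : Measure X} {K : Set X} (hK : MeasurableSet K) (hμK : μ K ≠ ⊤)
    {g : X → ℝ} (hg : AEStronglyMeasurable g μ) {M : ℝ} (hgM : ∀ x ∈ K, |g x| ≤ M)
    (hgK : ∀ᵐ x ∂μ, x ∉ K → g x = 0)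
    {F : ℕ → X → ℝ} (hF : ∀ q, AEStronglyMeasurable (F q) μ) {C : ℝ}
    (hFC : ∀ q, ∀ x ∈ K, |F q x| ≤ C) {φ : X → ℝ}
    (hFφ : ∀ᵐ x ∂μ, x ∈ K → Tendsto (fun q => F q x) atTop (𝓝 (φ x))) :
    Tendsto (fun q => ∫ x, F q x * g x ∂μ) atTop (𝓝 (∫ x, φ x * g x ∂μ)) := by
  refine tendsto_integral_of_dominated_convergence (K.indicator fun _ => C * M)
    (fun q => (hF q).mul hg) ((integrable_indicator_iff hK).2 (integrableOn_const hμK))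
    (fun q => ?_) ?_
  · filter_upwards [hgK] with x hx
    by_cases hxK : x ∈ K
    · rw [indicator_of_mem hxK, norm_mul]
      exact mul_le_mul (hFC q x hxK) (hgM x hxK) (norm_nonneg _)
        ((abs_nonneg _).trans (hFC q x hxK))
    · simp [indicator_of_notMem hxK, hx hxK]
  · filter_upwards [hgK, hFφ] with x hx hxφ
    by_cases hxK : x ∈ K
    · exact (hxφ hxK).mul tendsto_const_nhds
    · simp [hx hxK]

theorem setIntegral_Ioi_zero_indicator_one_mul {g : ℝ → ℝ} {a b : ℝ} (ha : 0 ≤ a) (hab : a ≤ b) :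
    ∫ u in Ioi 0, (Icc a b).indicator (fun _ => (1 : ℝ)) u * g u = ∫ u in a..b, g u := by
  have hIcc : (Ioi 0 ∩ Icc a b : Set ℝ) =ᵐ[volume] Icc a b := by
    have h : Ici 0 ∩ Icc a b = Icc a b :=
      inter_eq_right.2 (Icc_subset_Ici_self.trans (Ici_subset_Ici.2 ha))
    exact (Ioi_ae_eq_Ici.inter (ae_eq_refl _)).trans h.eventuallyEq
  simp_rw [← indicator_mul_left, one_mul]
  rw [setIntegral_indicator measurableSet_Icc, setIntegral_congr_set hIcc,
    integral_Icc_eq_integral_Ioc, intervalIntegral.integral_of_le hab]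

theorem tendsto_nat_mul_intervalIntegral_of_continuous {g : ℝ → ℝ} (hg : Continuous g) (a : ℝ) :
    Tendsto (fun n : ℕ => (n : ℝ) * ∫ x in a..a + 1 / n, g x) atTop (𝓝 (g a)) := by
  have hderiv : HasDerivAt (fun b => ∫ x in a..b, g x) (g a) a :=
    intervalIntegral.integral_hasDerivAt_right (hg.intervalIntegrable _ _)
      (hg.stronglyMeasurableAtFilter _ _) hg.continuousAt
  have hstep : Tendsto (fun n : ℕ => 1 / (n : ℝ)) atTop (𝓝[≠] 0) :=
    tendsto_nhdsWithin_of_tendsto_nhds_of_eventually_within _ tendsto_one_div_atTop_nhds_zero_nat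
      (by filter_upwards [eventually_ge_atTop 1] with n hn; simp; omega)
  refine ((hasDerivAt_iff_tendsto_slope_zero.1 hderiv).comp hstep).congr fun n => ?_
  simp

theorem stmt3_general (f : ℝ → ℝ → ℝ) (hf : Continuous (Function.uncurry f))
    (r : ℝ)
    (hvanish : ∀ s u, r < u → f s u = 0)
    (s u₀ : ℝ) (hu₀ : u₀ ∈ Set.Icc (0:ℝ) r)
    (P : ℕ → ℕ → Polynomial ℝ)
    (hbdd : ∀ p, ∃ C : ℝ, ∀ q, ∀ u ∈ Set.Icc (0:ℝ) (r + 1), |(P p q).eval u| ≤ C)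
    (hconv : ∀ p : ℕ, 1 ≤ p → ∀ u ∈ Set.Icc (0:ℝ) (r + 1),
      Tendsto (fun q => (P p q).eval u) atTop
        (nhds (Set.indicator (Set.Icc u₀ (u₀ + 1 / (p : ℝ))) (fun _ => (1:ℝ)) u))) :
    ∃ L : ℕ → ℝ,
      (∀ p : ℕ, 1 ≤ p →
        Tendsto (fun q => (p : ℝ) * ∫ u in Set.Ioi (0:ℝ), (P p q).eval u * f s u)
          atTop (nhds (L p))) ∧
      Tendsto L atTop (nhds (f s u₀)) := by
  have hfs : Continuous (f s) := hf.comp (Continuous.prodMk_right s)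
  obtain ⟨M, hM⟩ := isCompact_Icc.exists_bound_of_continuousOn (s := Icc 0 (r + 1))
    hfs.continuousOn
  refine ⟨fun p => p * ∫ u in u₀..u₀ + 1 / p, f s u,
    fun p hp => ?_, tendsto_nat_mul_intervalIntegral_of_continuous hfs u₀⟩
  obtain ⟨C, hC⟩ := hbdd p
  have hvanish' : ∀ᵐ u ∂volume.restrict (Ioi 0), u ∉ Icc 0 (r + 1) → f s u = 0 := by
    filter_upwards [ae_restrict_mem measurableSet_Ioi] with u hu hur
    exact hvanish s u (by simp only [mem_Icc, not_and_or, not_le] at hur; grind)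
  have hlim := tendsto_integral_mul_of_tendsto_of_bounded measurableSet_Icc
    (measure_Icc_lt_top.trans_le' (Measure.restrict_apply_le _ _)).ne hfs.aestronglyMeasurable
    hM hvanish' (fun q => (P p q).continuous.aestronglyMeasurable) hC
    (.of_forall (hconv p hp))
  rw [setIntegral_Ioi_zero_indicator_one_mul hu₀.1 (by simp)] at hlim
  exact hlim.const_mul _

theorem stmt3 (f : ℝ → ℝ → ℝ) (hf : Continuous (Function.uncurry f))
    (r : ℝ) (hr : 0 < r)
    (hvanish : ∀ s u, r < u → f s u = 0)
    (s u₀ : ℝ) (hs : s ∈ Set.Icc (0:ℝ) 1) (hu₀ : u₀ ∈ Set.Icc (0:ℝ) r)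
    (P : ℕ → ℕ → Polynomial ℝ)
    (hbdd : ∀ p, ∃ C : ℝ, ∀ q, ∀ u ∈ Set.Icc (0:ℝ) (r + 1), |(P p q).eval u| ≤ C)
    (hconv : ∀ p : ℕ, 1 ≤ p → ∀ u ∈ Set.Icc (0:ℝ) (r + 1),
      Tendsto (fun q => (P p q).eval u) atTop
        (nhds (Set.indicator (Set.Icc u₀ (u₀ + 1 / (p : ℝ))) (fun _ => (1:ℝ)) u))) :
    ∃ L : ℕ → ℝ,
      (∀ p : ℕ, 1 ≤ p →
        Tendsto (fun q => (p : ℝ) * ∫ u in Set.Ioi (0:ℝ), (P p q).eval u * f s u)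
          atTop (nhds (L p))) ∧
      Tendsto L atTop (nhds (f s u₀)) :=
  stmt3_general f hf r hvanish s u₀ hu₀ P hbdd hconv
end

section
/- An almost sure limit of a sequence of random variables, each belonging to a fixed closed linear space of centered Gaussian random variables in L², is itself a centered Gaussian random variable. -/
/-!
Almost sure convergence gives pointwise convergence of characteristic functions, so
`exp (-v n * t ^ 2 / 2)` converges to the characteristic function `φ t` of the limit law. Since `φ`
is continuous with `φ 0 = 1`, the variances cannot escape to infinity (otherwise `φ` would vanish
off `0`); hence `v n → v` and `φ` is the characteristic function of `N(0, v)`.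
-/

open MeasureTheory ProbabilityTheory Filter Complex Topology
open scoped NNReal

theorem tendsto_charFun_map_of_ae_tendsto {ι Ω E : Type*} {l : Filter ι} [l.IsCountablyGenerated]
    [MeasurableSpace Ω] {P : Measure Ω} [IsProbabilityMeasure P]
    [NormedAddCommGroup E] [InnerProductSpace ℝ E] [MeasurableSpace E] [BorelSpace E]
    {X : ι → Ω → E} {Z : Ω → E} (hX : ∀ i, AEMeasurable (X i) P) (hZ : AEMeasurable Z P)
    (hXZ : ∀ᵐ ω ∂P, Tendsto (fun i ↦ X i ω) l (𝓝 (Z ω))) (t : E) :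
    Tendsto (fun i ↦ charFun (P.map (X i)) t) l (𝓝 (charFun (P.map Z) t)) := by
  have h := (tendstoInDistribution_of_ae_tendsto hX hZ hXZ).tendsto
  simpa only [charFun_eq_integral_innerProbChar, ProbabilityMeasure.coe_mk] using
    (ProbabilityMeasure.tendsto_iff_forall_integral_rclike_tendsto ℂ).1 h
      (BoundedContinuousFunction.innerProbChar t)

theorem charFun_gaussianReal_zero (v : ℝ≥0) (t : ℝ) :
    charFun (gaussianReal 0 v) t = (Real.exp (-(v * t ^ 2 / 2)) : ℂ) := by
  simp [charFun_gaussianReal]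

theorem exists_tendsto_of_tendsto_exp_neg_mul_sq {ι : Type*} {l : Filter ι} [l.NeBot]
    {v : ι → ℝ} {φ : ℝ → ℝ} (hφ : ContinuousAt φ 0) (hφ₀ : φ 0 = 1)
    (h : ∀ t, Tendsto (fun i ↦ Real.exp (-(v i * t ^ 2 / 2))) l (𝓝 (φ t))) :
    ∃ w, Tendsto v l (𝓝 w) := by
  have h_rpow : ∀ i t, Real.exp (-(v i * t ^ 2 / 2)) = Real.exp (-(v i / 2)) ^ (t ^ 2) := by
    intro i t
    rw [← Real.exp_mul]
    ring_nf
  have h_one : Tendsto (fun i ↦ Real.exp (-(v i / 2))) l (𝓝 (φ 1)) := by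
    simpa using h 1
  have h_ne : φ 1 ≠ 0 := by
    intro h_zero
    have h_off : ∀ t ≠ 0, φ t = 0 := by
      intro t ht
      refine tendsto_nhds_unique (h t) ?_
      simp_rw [h_rpow]
      have h_pow := (Real.continuousAt_rpow_const 0 (t ^ 2) (Or.inr (sq_nonneg t))).tendsto.comp
        (h_zero ▸ h_one)
      rwa [Real.zero_rpow (pow_ne_zero 2 ht)] at h_pow
    have h_lim : Tendsto φ (𝓝[≠] 0) (𝓝 0) :=
      tendsto_const_nhds.congr' (eventually_nhdsWithin_of_forall fun t ht ↦ (h_off t ht).symm)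
    exact one_ne_zero (hφ₀ ▸ tendsto_nhds_unique (hφ.tendsto.mono_left nhdsWithin_le_nhds) h_lim)
  refine ⟨-2 * Real.log (φ 1), ?_⟩
  refine (((Real.continuousAt_log h_ne).tendsto.comp h_one).const_mul (-2)).congr fun i ↦ ?_
  rw [Function.comp_apply, Real.log_exp]
  ring

theorem exists_eq_gaussianReal_of_tendsto_charFun {ι : Type*} {l : Filter ι} [l.NeBot]
    {v : ι → ℝ≥0} {μ : Measure ℝ} [IsProbabilityMeasure μ]
    (h : ∀ t, Tendsto (fun i ↦ charFun (gaussianReal 0 (v i)) t) l (𝓝 (charFun μ t))) :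
    ∃ w : ℝ≥0, μ = gaussianReal 0 w := by
  simp_rw [charFun_gaussianReal_zero] at h
  obtain ⟨w, hw⟩ := exists_tendsto_of_tendsto_exp_neg_mul_sq (φ := fun t ↦ (charFun μ t).re)
    (continuous_re.comp continuous_charFun).continuousAt (by simp)
    fun t ↦ by
      simpa only [Function.comp_def, ofReal_re] using (continuous_re.tendsto _).comp (h t)
  lift w to ℝ≥0 using ge_of_tendsto' hw fun i ↦ (v i).coe_nonneg
  refine ⟨w, Measure.ext_of_charFun (funext fun t ↦ tendsto_nhds_unique (h t) ?_)⟩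
  rw [charFun_gaussianReal_zero]
  exact (continuous_ofReal.tendsto _).comp
    ((Real.continuous_exp.tendsto _).comp (((hw.mul_const _).div_const _).neg))

theorem stmt4 {Ω : Type*} [MeasurableSpace Ω] (P : Measure Ω) [IsProbabilityMeasure P]
    (X : ℕ → Ω → ℝ) (Xlim : Ω → ℝ)
    (hmeas : ∀ n, Measurable (X n)) (hmlim : Measurable Xlim)
    (hgauss : ∀ n, ∃ v : NNReal, Measure.map (X n) P = gaussianReal 0 v)
    (hconv : ∀ᵐ ω ∂P, Tendsto (fun n => X n ω) atTop (nhds (Xlim ω))) :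
    ∃ v : NNReal, Measure.map Xlim P = gaussianReal 0 v := by
  choose v hv using hgauss
  have := Measure.isProbabilityMeasure_map (μ := P) hmlim.aemeasurable
  refine exists_eq_gaussianReal_of_tendsto_charFun (l := atTop) (v := v) fun t ↦ ?_
  simpa only [hv] using tendsto_charFun_map_of_ae_tendsto (fun n ↦ (hmeas n).aemeasurable)
    hmlim.aemeasurable hconv t
end
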